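/- arXiv:2301.04553 — 5 statements merged into one kernel-verified Lean document; each statement's English description precedes it below -/
import Mathlib

section
/- Let v₀, …, v_n be real numbers with v₀ = v_n = 0 and x_n = 0 < x_{n−1} < … < x₀ = L. Define Z = (1/2) Σ_{i=1}^n (v_{i−1}−v_i)²/(x_{i−1}−x_i) and D_i = (v_{i−1}−v_i)/(x_{i−1}−x_i) for i = 1,…,n. Then 2Z ≤ L·n·Σ_{i=1}^{n−1} (D_{i+1} − D_i)². -/
theorem stmt5 (n : ℕ) (hn : 2 ≤ n) (L : ℝ) (hL : 0 < L)
    (x v : ℕ → ℝ) (hx0 : x 0 = L) (hxn : x n = 0)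
    (hmono : ∀ i < n, x (i + 1) < x i)
    (hv0 : v 0 = 0) (hvn : v n = 0)
    (D : ℕ → ℝ) (hD : ∀ i, D i = (v (i - 1) - v i) / (x (i - 1) - x i))
    (Z : ℝ)
    (hZ : Z = (1/2) * ∑ i ∈ Finset.Icc 1 n, (v (i - 1) - v i)^2 / (x (i - 1) - x i)) :
    2 * Z ≤ L * n * ∑ i ∈ Finset.Ico 1 n, (D (i + 1) - D i)^2 := by
  set h : ℕ → ℝ := fun i => x (i - 1) - x i with hh
  have hpos : ∀ i ∈ Finset.Icc 1 n, 0 < h i := by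
    intro i hi
    simp only [Finset.mem_Icc] at hi
    have h1 : i - 1 < n := by omega
    have h2 := hmono (i - 1) h1
    rw [Nat.sub_add_cancel hi.1] at h2
    simpa [hh] using sub_pos.mpr h2
  have tele : ∀ f : ℕ → ℝ, ∑ i ∈ Finset.Icc 1 n, (f (i - 1) - f i) = f 0 - f n := by
    intro f
    rw [← Finset.Ico_add_one_right_eq_Icc, Finset.sum_Ico_eq_sum_range]
    calc ∑ j ∈ Finset.range n, (f (1 + j - 1) - f (1 + j))
        = ∑ j ∈ Finset.range n, (f j - f (j + 1)) := by
          refine Finset.sum_congr rfl fun j _ => ?_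
          congr 2 <;> omega
      _ = f 0 - f n := Finset.sum_range_sub' f n
  have hsumh : ∑ i ∈ Finset.Icc 1 n, h i = L := by
    have := tele x; rw [hx0, hxn] at this; simpa [hh] using this
  have hvdiff : ∀ i ∈ Finset.Icc 1 n, v (i - 1) - v i = D i * h i := by
    intro i hi
    rw [hD i]
    field_simp [ne_of_gt (hpos i hi)]
    exact (mul_div_cancel_right₀ _ (ne_of_gt (hpos i hi))).symm
  have hsumD0 : ∑ i ∈ Finset.Icc 1 n, D i * h i = 0 := by
    rw [← Finset.sum_congr rfl hvdiff, tele v, hv0, hvn, sub_zero]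
  have hne : (Finset.Icc 1 n).Nonempty := ⟨1, by simp; omega⟩
  have hexa : ∃ a ∈ Finset.Icc 1 n, D a ≤ 0 := by
    by_contra hcon
    push_neg at hcon
    have : 0 < ∑ i ∈ Finset.Icc 1 n, D i * h i :=
      Finset.sum_pos (fun i hi => mul_pos (hcon i hi) (hpos i hi)) hne
    linarith
  have hexb : ∃ b ∈ Finset.Icc 1 n, 0 ≤ D b := by
    by_contra hcon
    push_neg at hcon
    have : ∑ i ∈ Finset.Icc 1 n, D i * h i < 0 :=
      Finset.sum_neg (fun i hi => mul_neg_of_neg_of_pos (hcon i hi) (hpos i hi)) hne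
    linarith
  obtain ⟨a, ha, hDa⟩ := hexa
  obtain ⟨b, hb, hDb⟩ := hexb
  set S : ℝ := ∑ k ∈ Finset.Ico 1 n, |D (k + 1) - D k| with hS
  set T : ℝ := ∑ k ∈ Finset.Ico 1 n, (D (k + 1) - D k) ^ 2 with hT
  have hTnn : 0 ≤ T := Finset.sum_nonneg fun k _ => sq_nonneg _
  have key : ∀ p q : ℕ, p ≤ q → |D q - D p| ≤ ∑ k ∈ Finset.Ico p q, |D (k + 1) - D k| := by
    intro p q hpq
    induction q, hpq using Nat.le_induction with
    | base => simp
    | succ q hpq ih =>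
      rw [Finset.sum_Ico_succ_top hpq]
      have e : D (q + 1) - D p = (D q - D p) + (D (q + 1) - D q) := by ring
      rw [e]
      exact le_trans (abs_add_le _ _) (add_le_add ih le_rfl)
  have pair : ∀ p ∈ Finset.Icc 1 n, ∀ q ∈ Finset.Icc 1 n, |D q - D p| ≤ S := by
    intro p hp q hq
    simp only [Finset.mem_Icc] at hp hq
    rcases le_total p q with hpq | hqp
    · refine le_trans (key p q hpq) ?_
      refine Finset.sum_le_sum_of_subset_of_nonneg ?_ fun _ _ _ => abs_nonneg _
      exact Finset.Ico_subset_Ico hp.1 hq.2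
    · rw [abs_sub_comm]
      refine le_trans (key q p hqp) ?_
      refine Finset.sum_le_sum_of_subset_of_nonneg ?_ fun _ _ _ => abs_nonneg _
      exact Finset.Ico_subset_Ico hq.1 hp.2
  have hDle : ∀ i ∈ Finset.Icc 1 n, |D i| ≤ S := by
    intro i hi
    rcases le_or_gt 0 (D i) with hpos' | hneg
    · calc |D i| = D i := abs_of_nonneg hpos'
        _ ≤ D i - D a := by linarith
        _ ≤ |D i - D a| := le_abs_self _
        _ ≤ S := pair a ha i hi
    · calc |D i| = -(D i) := abs_of_neg hneg
        _ ≤ D b - D i := by linarith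
        _ ≤ |D b - D i| := le_abs_self _
        _ ≤ S := pair i hi b hb
  have hCS : S ^ 2 ≤ (n : ℝ) * T := by
    have := sq_sum_le_card_mul_sum_sq (s := Finset.Ico 1 n)
      (f := fun k => |D (k + 1) - D k|)
    simp only [sq_abs] at this
    rw [Nat.card_Ico] at this
    calc S ^ 2 ≤ ((n - 1 : ℕ) : ℝ) * T := by exact_mod_cast this
      _ ≤ (n : ℝ) * T := by
          apply mul_le_mul_of_nonneg_right _ hTnn
          exact_mod_cast Nat.sub_le n 1
  have h2Z : 2 * Z = ∑ i ∈ Finset.Icc 1 n, h i * D i ^ 2 := by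
    rw [hZ]
    rw [show 2 * ((1/2 : ℝ) * ∑ i ∈ Finset.Icc 1 n, (v (i - 1) - v i)^2 / (x (i - 1) - x i))
        = ∑ i ∈ Finset.Icc 1 n, (v (i - 1) - v i)^2 / (x (i - 1) - x i) by ring]
    refine Finset.sum_congr rfl fun i hi => ?_
    have hne' : h i ≠ 0 := ne_of_gt (hpos i hi)
    rw [hvdiff i hi]
    show (D i * h i) ^ 2 / h i = h i * D i ^ 2
    field_simp
  rw [h2Z]
  calc ∑ i ∈ Finset.Icc 1 n, h i * D i ^ 2
      ≤ ∑ i ∈ Finset.Icc 1 n, h i * ((n : ℝ) * T) := by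
        refine Finset.sum_le_sum fun i hi => ?_
        refine mul_le_mul_of_nonneg_left ?_ (le_of_lt (hpos i hi))
        calc D i ^ 2 = |D i| ^ 2 := (sq_abs _).symm
          _ ≤ S ^ 2 := pow_le_pow_left₀ (abs_nonneg _) (hDle i hi) 2
          _ ≤ (n : ℝ) * T := hCS
    _ = L * n * T := by rw [← Finset.sum_mul, hsumh]; ring
end

section
/- Let v₀,…,v_n be real with v₀ = v_n = 0, x_n = 0 < x_{n−1} < … < x₀ = L, D_i = (v_{i−1}−v_i)/(x_{i−1}−x_i), Z = (1/2)Σ_{i=1}^n (v_{i−1}−v_i)² /(x_{i−1}−x_i). If a ≤ n(x_{i−1}−x_i) for all i for some a > 0, then for every ε > 0: max_{i} D_i² ≤ (2/a)(1 + 1/ε) Z + ε n Σ_{i=1}^{n−1} (D_{i+1} − D_i)². -/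
private lemma young_aux : ∀ P Q c : ℝ, 0 < c → |P^2 - Q^2| ≤ c*(P-Q)^2 + 1/(2*c)*(P^2+Q^2) := by
  intro P Q c hcc
  have heq : c*(P-Q)^2 + 1/(2*c)*(P^2+Q^2)
      = (2*c^2*(P-Q)^2 + (P^2+Q^2))/(2*c) := by
    field_simp
  rw [heq]
  rcases abs_cases (P^2 - Q^2) with ⟨he, _⟩ | ⟨he, _⟩ <;>
    rw [he, le_div_iff₀ (by positivity : (0:ℝ) < 2*c)]
  · nlinarith [sq_nonneg (2*c*(P-Q) - (P+Q)), sq_nonneg (P-Q)]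
  · nlinarith [sq_nonneg (2*c*(P-Q) + (P+Q)), sq_nonneg (P-Q)]

theorem stmt7 (n : ℕ) (hn : 2 ≤ n) (L a : ℝ) (hL : 0 < L) (ha : 0 < a)
    (x v : ℕ → ℝ) (hx0 : x 0 = L) (hxn : x n = 0)
    (hmono : ∀ i < n, x (i + 1) < x i)
    (hspace : ∀ i ∈ Finset.Icc 1 n, a ≤ n * (x (i - 1) - x i))
    (hv0 : v 0 = 0) (hvn : v n = 0)
    (D : ℕ → ℝ) (hD : ∀ i, D i = (v (i - 1) - v i) / (x (i - 1) - x i))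
    (Z : ℝ)
    (hZ : Z = (1/2) * ∑ i ∈ Finset.Icc 1 n, (v (i - 1) - v i)^2 / (x (i - 1) - x i)) :
    ∀ ε > (0:ℝ), ∀ i ∈ Finset.Icc 1 n,
      (D i)^2 ≤ (2 / a) * (1 + 1 / ε) * Z
        + ε * n * ∑ j ∈ Finset.Ico 1 n, (D (j + 1) - D j)^2 := by
  intro ε hε i hi
  have hn0 : (0:ℝ) < (n:ℝ) := by positivity
  -- gap positivity
  have hgap : ∀ k ∈ Finset.Icc 1 n, 0 < x (k-1) - x k := by
    intro k hk
    simp only [Finset.mem_Icc] at hk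
    have h := hmono (k-1) (by omega)
    rw [Nat.sub_add_cancel hk.1] at h
    linarith
  -- sum of gaps = L
  have hsumgap : ∑ k ∈ Finset.Icc 1 n, (x (k-1) - x k) = L := by
    have : Finset.Icc 1 n = Finset.Ico 1 (n+1) := by rfl
    rw [this, Finset.sum_Ico_eq_sum_range]
    have hre : ∀ k ∈ Finset.range (n+1-1), (x (1+k-1) - x (1+k)) = (x k - x (k+1)) := by
      intro k _
      congr 2
      · omega
      · omega
    rw [Finset.sum_congr rfl hre, Finset.sum_range_sub' x]
    have : n + 1 - 1 = n := by omega
    rw [this, hx0, hxn]; ring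
  -- a ≤ L
  have haL : a ≤ L := by
    have h1 : ∀ k ∈ Finset.Icc 1 n, a / n ≤ x (k-1) - x k := by
      intro k hk
      have := hspace k hk
      rw [div_le_iff₀ hn0]
      linarith [this]
    have h2 : (Finset.Icc 1 n).card • (a / n) ≤ ∑ k ∈ Finset.Icc 1 n, (x (k-1) - x k) :=
      Finset.card_nsmul_le_sum _ _ _ h1
    rw [hsumgap, Nat.card_Icc] at h2
    have hc : (n + 1 - 1) = n := by omega
    rw [hc] at h2
    rw [nsmul_eq_mul] at h2
    calc a = n * (a / n) := by field_simp
    _ ≤ L := h2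
  -- 2Z as sum of D² * gap
  have h2Z : ∑ k ∈ Finset.Icc 1 n, (D k)^2 * (x (k-1) - x k) = 2 * Z := by
    rw [hZ]
    rw [← mul_assoc]
    norm_num
    apply Finset.sum_congr rfl
    intro k hk
    have hg := hgap k hk
    rw [hD k]
    field_simp
  -- Z nonneg
  have hZnn : 0 ≤ Z := by
    rw [hZ]
    apply mul_nonneg (by norm_num)
    apply Finset.sum_nonneg
    intro k hk
    exact div_nonneg (sq_nonneg _) (le_of_lt (hgap k hk))
  -- sum of D² bounded
  have hT : ∑ k ∈ Finset.Icc 1 n, (D k)^2 ≤ (n / a) * (2 * Z) := by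
    rw [← h2Z, Finset.mul_sum]
    apply Finset.sum_le_sum
    intro k hk
    have hs := hspace k hk
    have hDnn := sq_nonneg (D k)
    have : a * (D k)^2 ≤ (n * (x (k-1) - x k)) * (D k)^2 :=
      mul_le_mul_of_nonneg_right hs hDnn
    rw [div_mul_eq_mul_div, le_div_iff₀ ha]
    nlinarith
  have hTnn : ∀ k, 0 ≤ (D k)^2 := fun k => sq_nonneg _
  -- minimum element
  obtain ⟨j, hj, hjmin⟩ := Finset.exists_min_image (Finset.Icc 1 n) (fun k => (D k)^2)
    ⟨1, by simp; omega⟩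
  have hjbound : (D j)^2 ≤ (2 / a) * Z := by
    have h1 : (D j)^2 * L ≤ 2 * Z := by
      rw [← h2Z, ← hsumgap, Finset.mul_sum]
      apply Finset.sum_le_sum
      intro k hk
      exact mul_le_mul_of_nonneg_right (hjmin k hk) (le_of_lt (hgap k hk))
    have h2 : (D j)^2 * a ≤ (D j)^2 * L := mul_le_mul_of_nonneg_left haL (sq_nonneg _)
    rw [div_mul_eq_mul_div, le_div_iff₀ ha]
    nlinarith
  -- telescoping bound
  set A := ∑ k ∈ Finset.Ico 1 n, |(D (k+1))^2 - (D k)^2| with hA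
  have htel : (D i)^2 ≤ (D j)^2 + A := by
    have key : ∀ p q : ℕ, p ∈ Finset.Icc 1 n → q ∈ Finset.Icc 1 n → p ≤ q →
        |(D q)^2 - (D p)^2| ≤ A := by
      intro p q hp hq hpq
      simp only [Finset.mem_Icc] at hp hq
      have hts : ∑ k ∈ Finset.Ico p q, ((D (k+1))^2 - (D k)^2) = (D q)^2 - (D p)^2 := by
        rw [Finset.sum_Ico_eq_sum_range]
        have hmain := Finset.sum_range_sub (fun m => (D (p + m))^2) (q - p)
        have hcg : ∑ k ∈ Finset.range (q-p), ((D (p+k+1))^2 - (D (p+k))^2)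
            = ∑ k ∈ Finset.range (q-p), ((D (p+(k+1)))^2 - (D (p+k))^2) := by
          apply Finset.sum_congr rfl
          intro k _
          rfl
        have e1 : p + (q - p) = q := by omega
        rw [hcg, hmain, e1, Nat.add_zero]
      calc |(D q)^2 - (D p)^2|
          = |∑ k ∈ Finset.Ico p q, ((D (k+1))^2 - (D k)^2)| := by rw [hts]
        _ ≤ ∑ k ∈ Finset.Ico p q, |(D (k+1))^2 - (D k)^2| :=
            Finset.abs_sum_le_sum_abs _ _
        _ ≤ A := by
            apply Finset.sum_le_sum_of_subset_of_nonneg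
            · intro k hk
              simp only [Finset.mem_Ico] at hk ⊢
              omega
            · intro k _ _; exact abs_nonneg _
    rcases le_total j i with h | h
    · have hk := key j i hj hi h
      have := le_abs_self ((D i)^2 - (D j)^2)
      linarith
    · have hk := key i j hi hj h
      rw [abs_sub_comm] at hk
      have := le_abs_self ((D i)^2 - (D j)^2)
      linarith
  -- Young bound on A
  set S := ∑ k ∈ Finset.Ico 1 n, (D (k+1) - D k)^2 with hS
  have hc : (0:ℝ) < ε * n := by positivity
  have hyoung : A ≤ ε * n * S + (1 / (2 * (ε * n))) *
      ∑ k ∈ Finset.Ico 1 n, ((D (k+1))^2 + (D k)^2) := by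
    rw [hA, hS, Finset.mul_sum, Finset.mul_sum, ← Finset.sum_add_distrib]
    apply Finset.sum_le_sum
    intro k _
    exact young_aux (D (k+1)) (D k) (ε * n) hc
  -- bound the pair sum by 2T
  have hpair : ∑ k ∈ Finset.Ico 1 n, ((D (k+1))^2 + (D k)^2)
      ≤ 2 * ∑ k ∈ Finset.Icc 1 n, (D k)^2 := by
    rw [Finset.sum_add_distrib, two_mul]
    have h1 : ∑ k ∈ Finset.Ico 1 n, (D (k+1))^2 ≤ ∑ k ∈ Finset.Icc 1 n, (D k)^2 := by
      have hinj : ∀ p ∈ Finset.Ico 1 n, ∀ q ∈ Finset.Ico 1 n, p + 1 = q + 1 → p = q := by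
        intro p _ q _ h; omega
      calc ∑ k ∈ Finset.Ico 1 n, (D (k+1))^2
          = ∑ k ∈ (Finset.Ico 1 n).image (· + 1), (D k)^2 := (Finset.sum_image (f := fun k => (D k)^2) hinj).symm
        _ ≤ ∑ k ∈ Finset.Icc 1 n, (D k)^2 := by
            apply Finset.sum_le_sum_of_subset_of_nonneg
            · intro k hk
              simp only [Finset.mem_image, Finset.mem_Ico] at hk
              obtain ⟨m, hm, rfl⟩ := hk
              simp only [Finset.mem_Icc]; omega
            · intro k _ _; exact sq_nonneg _
    have h2 : ∑ k ∈ Finset.Ico 1 n, (D k)^2 ≤ ∑ k ∈ Finset.Icc 1 n, (D k)^2 := by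
      apply Finset.sum_le_sum_of_subset_of_nonneg
      · intro k hk; simp only [Finset.mem_Ico] at hk; simp only [Finset.mem_Icc]; omega
      · intro k _ _; exact sq_nonneg _
    linarith
  -- combine
  have hA2 : A ≤ ε * n * S + (2 / (ε * a)) * Z := by
    have h3 : (1 / (2 * (ε * n))) * ∑ k ∈ Finset.Ico 1 n, ((D (k+1))^2 + (D k)^2)
        ≤ (1 / (2 * (ε * n))) * (2 * ((n / a) * (2 * Z))) := by
      apply mul_le_mul_of_nonneg_left _ (by positivity)
      calc ∑ k ∈ Finset.Ico 1 n, ((D (k+1))^2 + (D k)^2)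
          ≤ 2 * ∑ k ∈ Finset.Icc 1 n, (D k)^2 := hpair
        _ ≤ 2 * ((n / a) * (2 * Z)) := by linarith [hT]
    have heq : (1 / (2 * (ε * n))) * (2 * ((n / a) * (2 * Z))) = (2 / (ε * a)) * Z := by
      field_simp
    rw [heq] at h3
    linarith [hyoung]
  have hfinal : (2 / a) * Z + (2 / (ε * a)) * Z = (2 / a) * (1 + 1 / ε) * Z := by
    field_simp
  calc (D i)^2 ≤ (D j)^2 + A := htel
    _ ≤ (2 / a) * Z + (ε * n * S + (2 / (ε * a)) * Z) := by linarith [hjbound]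
    _ = (2 / a) * (1 + 1 / ε) * Z + ε * n * S := by linarith [hfinal]
end

section
/- For the particle ODE system with modified variables w_i = v_i − nK(n(x_{i−1}−x_i)) + nK(n(x_i−x_{i+1})), the modified energy W_n(t) = (m/(2n))Σ_{i=1}^{n−1} w_i² + (m/n)Σ_{i=1}^n Φ(n(x_{i−1}−x_i)) satisfies Ẇ_n(t) = −mn Σ_{i=1}^{n−1} (Φ'(n(x_{i−1}−x_i)) − Φ'(n(x_i−x_{i+1})))(K(n(x_{i−1}−x_i)) − K(n(x_i−x_{i+1}))) ≤ 0, provided both Φ' and K are increasing on (0,∞). -/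
private lemma abel_sum' (g u : ℕ → ℝ) (k : ℕ) :
    ∑ i ∈ Finset.Icc 1 (k + 1), g i * (u (i - 1) - u i)
      = g 1 * u 0 - g (k + 1) * u (k + 1)
        + ∑ i ∈ Finset.Icc 1 k, u i * (g (i + 1) - g i) := by
  induction k with
  | zero => simp; ring
  | succ k ih =>
    rw [Finset.sum_Icc_succ_top (by omega : 1 ≤ k + 1 + 1), ih,
        Finset.sum_Icc_succ_top (by omega : 1 ≤ k + 1)]
    simp only [Nat.add_sub_cancel]
    ring

theorem stmt11 (n : ℕ) (hn : 2 ≤ n) (m L : ℝ) (hm : 0 < m) (hL : 0 < L)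
    (Φ K Φ' K' : ℝ → ℝ)
    (hΦ : ∀ s > (0:ℝ), HasDerivAt Φ (Φ' s) s)
    (hK : ∀ s > (0:ℝ), HasDerivAt K (K' s) s)
    (hΦ'mono : MonotoneOn Φ' (Set.Ioi 0))
    (hKmono : MonotoneOn K (Set.Ioi 0))
    (x v : ℕ → ℝ → ℝ)
    (hx0 : ∀ t, x 0 t = L) (hv0 : ∀ t, v 0 t = 0)
    (hxn : ∀ t, x n t = 0) (hvn : ∀ t, v n t = 0)
    (horder : ∀ t, ∀ i ∈ Finset.Icc 1 n, x i t < x (i - 1) t)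
    (hxdot : ∀ i ∈ Finset.Icc 1 (n - 1), ∀ t, HasDerivAt (x i) (v i t) t)
    (hvdot : ∀ i ∈ Finset.Icc 1 (n - 1), ∀ t, HasDerivAt (v i)
      (n * Φ' (n * (x (i - 1) t - x i t)) - n * Φ' (n * (x i t - x (i + 1) t))
        + n ^ 2 * K' (n * (x (i - 1) t - x i t)) * (v (i - 1) t - v i t)
        + n ^ 2 * K' (n * (x i t - x (i + 1) t)) * (v (i + 1) t - v i t)) t)
    (w : ℕ → ℝ → ℝ)
    (hw : ∀ i ∈ Finset.Icc 1 (n - 1), ∀ t,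
      w i t = v i t - n * K (n * (x (i - 1) t - x i t)) + n * K (n * (x i t - x (i + 1) t)))
    (W : ℝ → ℝ)
    (hW : ∀ t, W t = (m / (2 * n)) * ∑ i ∈ Finset.Icc 1 (n - 1), (w i t)^2
        + (m / n) * ∑ i ∈ Finset.Icc 1 n, Φ (n * (x (i - 1) t - x i t))) :
    ∀ t, HasDerivAt W
        (-(m * n) * ∑ i ∈ Finset.Icc 1 (n - 1),
          (Φ' (n * (x (i - 1) t - x i t)) - Φ' (n * (x i t - x (i + 1) t)))
            * (K (n * (x (i - 1) t - x i t)) - K (n * (x i t - x (i + 1) t)))) t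
      ∧ -(m * n) * ∑ i ∈ Finset.Icc 1 (n - 1),
          (Φ' (n * (x (i - 1) t - x i t)) - Φ' (n * (x i t - x (i + 1) t)))
            * (K (n * (x (i - 1) t - x i t)) - K (n * (x i t - x (i + 1) t))) ≤ 0 := by
  obtain ⟨N, rfl⟩ : ∃ N, n = N + 2 := ⟨n - 2, by omega⟩
  simp only [show N + 2 - 1 = N + 1 from rfl] at hxdot hvdot hw hW
  intro t
  set c : ℝ := ((N + 2 : ℕ) : ℝ) with hc
  have hcpos : (0:ℝ) < c := by positivity
  have hcne : c ≠ 0 := ne_of_gt hcpos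
  -- positivity of gaps
  have hpos : ∀ i, 1 ≤ i → i ≤ N + 2 → (0:ℝ) < c * (x (i - 1) t - x i t) := by
    intro i h1 h2
    exact mul_pos hcpos (sub_pos.2 (horder t i (Finset.mem_Icc.2 ⟨h1, h2⟩)))
  -- derivatives of positions
  have hxd : ∀ j, j ≤ N + 2 → HasDerivAt (x j) (v j t) t := by
    intro j hj
    rcases Nat.eq_zero_or_pos j with rfl | hj1
    · rw [hv0]
      have : x 0 = fun _ => L := funext hx0
      rw [this]; exact hasDerivAt_const t L
    · rcases eq_or_lt_of_le hj with rfl | hj2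
      · rw [hvn]
        have : x (N + 2) = fun _ => (0:ℝ) := funext hxn
        rw [this]; exact hasDerivAt_const t 0
      · exact hxdot j (Finset.mem_Icc.2 ⟨hj1, by omega⟩) t
  -- derivatives of gaps
  have hgapd : ∀ i, 1 ≤ i → i ≤ N + 2 →
      HasDerivAt (fun s => c * (x (i - 1) s - x i s)) (c * (v (i - 1) t - v i t)) t := by
    intro i h1 h2
    exact ((hxd (i - 1) (by omega)).sub (hxd i h2)).const_mul c
  -- derivatives of Φ ∘ gap
  have hΦd : ∀ i, 1 ≤ i → i ≤ N + 2 →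
      HasDerivAt (fun s => Φ (c * (x (i - 1) s - x i s)))
        (Φ' (c * (x (i - 1) t - x i t)) * (c * (v (i - 1) t - v i t))) t := by
    intro i h1 h2
    exact (hΦ _ (hpos i h1 h2)).comp t (hgapd i h1 h2)
  -- derivatives of K ∘ gap
  have hKd : ∀ i, 1 ≤ i → i ≤ N + 2 →
      HasDerivAt (fun s => K (c * (x (i - 1) s - x i s)))
        (K' (c * (x (i - 1) t - x i t)) * (c * (v (i - 1) t - v i t))) t := by
    intro i h1 h2
    exact (hK _ (hpos i h1 h2)).comp t (hgapd i h1 h2)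
  -- derivatives of w
  have hwd : ∀ i ∈ Finset.Icc 1 (N + 1), HasDerivAt (w i)
      (c * (Φ' (c * (x (i - 1) t - x i t)) - Φ' (c * (x i t - x (i + 1) t)))) t := by
    intro i hi
    rw [Finset.mem_Icc] at hi
    have hwfun : w i = fun s => v i s - c * K (c * (x (i - 1) s - x i s))
        + c * K (c * (x i s - x (i + 1) s)) :=
      funext fun s => hw i (Finset.mem_Icc.2 hi) s
    rw [hwfun]
    have h1 := hvdot i (Finset.mem_Icc.2 hi) t
    have h2 := (hKd i hi.1 (by omega)).const_mul c
    have h3 := (hKd (i + 1) (by omega) (by omega)).const_mul c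
    simp only [Nat.add_sub_cancel] at h3
    have key := (h1.sub h2).add h3
    exact key.congr_deriv (by ring)
  -- derivative of the kinetic sum
  have hsum1 : HasDerivAt (fun s => ∑ i ∈ Finset.Icc 1 (N + 1), (w i s) ^ 2)
      (∑ i ∈ Finset.Icc 1 (N + 1), 2 * w i t *
        (c * (Φ' (c * (x (i - 1) t - x i t)) - Φ' (c * (x i t - x (i + 1) t))))) t := by
    apply HasDerivAt.fun_sum
    intro i hi
    have := (hwd i hi).fun_pow 2
    simpa using this
  -- derivative of the potential sum
  have hsum2 : HasDerivAt (fun s => ∑ i ∈ Finset.Icc 1 (N + 2), Φ (c * (x (i - 1) s - x i s)))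
      (∑ i ∈ Finset.Icc 1 (N + 2),
        Φ' (c * (x (i - 1) t - x i t)) * (c * (v (i - 1) t - v i t))) t := by
    apply HasDerivAt.fun_sum
    intro i hi
    rw [Finset.mem_Icc] at hi
    exact hΦd i hi.1 hi.2
  have hWfun : W = fun s => (m / (2 * c)) * ∑ i ∈ Finset.Icc 1 (N + 1), (w i s) ^ 2
      + (m / c) * ∑ i ∈ Finset.Icc 1 (N + 2), Φ (c * (x (i - 1) s - x i s)) := funext hW
  have hWd : HasDerivAt W
      ((m / (2 * c)) * ∑ i ∈ Finset.Icc 1 (N + 1), 2 * w i t *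
          (c * (Φ' (c * (x (i - 1) t - x i t)) - Φ' (c * (x i t - x (i + 1) t))))
        + (m / c) * ∑ i ∈ Finset.Icc 1 (N + 2),
          Φ' (c * (x (i - 1) t - x i t)) * (c * (v (i - 1) t - v i t))) t := by
    rw [hWfun]
    exact (hsum1.const_mul _).add (hsum2.const_mul _)
  -- the algebraic identity
  have habel := abel_sum' (fun i => Φ' (c * (x (i - 1) t - x i t))) (fun i => v i t) (N + 1)
  simp only [Nat.add_sub_cancel, hv0, hvn] at habel
  have hS2 : (∑ i ∈ Finset.Icc 1 (N + 2),
        Φ' (c * (x (i - 1) t - x i t)) * (c * (v (i - 1) t - v i t)))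
      = c * ∑ i ∈ Finset.Icc 1 (N + 1), v i t *
          (Φ' (c * (x i t - x (i + 1) t)) - Φ' (c * (x (i - 1) t - x i t))) := by
    rw [show (∑ i ∈ Finset.Icc 1 (N + 2),
        Φ' (c * (x (i - 1) t - x i t)) * (c * (v (i - 1) t - v i t)))
      = c * ∑ i ∈ Finset.Icc 1 (N + 2),
          Φ' (c * (x (i - 1) t - x i t)) * (v (i - 1) t - v i t) by
        rw [Finset.mul_sum]; exact Finset.sum_congr rfl fun i _ => by ring]
    rw [habel]
    ring
  have heq : (m / (2 * c)) * (∑ i ∈ Finset.Icc 1 (N + 1), 2 * w i t *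
          (c * (Φ' (c * (x (i - 1) t - x i t)) - Φ' (c * (x i t - x (i + 1) t)))))
        + (m / c) * (∑ i ∈ Finset.Icc 1 (N + 2),
          Φ' (c * (x (i - 1) t - x i t)) * (c * (v (i - 1) t - v i t)))
      = -(m * c) * ∑ i ∈ Finset.Icc 1 (N + 1),
          (Φ' (c * (x (i - 1) t - x i t)) - Φ' (c * (x i t - x (i + 1) t)))
            * (K (c * (x (i - 1) t - x i t)) - K (c * (x i t - x (i + 1) t))) := by
    rw [hS2, Finset.mul_sum, Finset.mul_sum, Finset.mul_sum, Finset.mul_sum,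
      ← Finset.sum_add_distrib]
    apply Finset.sum_congr rfl
    intro i hi
    rw [hw i hi t]
    field_simp
    ring
  have hsign : -(m * c) * ∑ i ∈ Finset.Icc 1 (N + 1),
          (Φ' (c * (x (i - 1) t - x i t)) - Φ' (c * (x i t - x (i + 1) t)))
            * (K (c * (x (i - 1) t - x i t)) - K (c * (x i t - x (i + 1) t))) ≤ 0 := by
    have hS : 0 ≤ ∑ i ∈ Finset.Icc 1 (N + 1),
        (Φ' (c * (x (i - 1) t - x i t)) - Φ' (c * (x i t - x (i + 1) t)))
          * (K (c * (x (i - 1) t - x i t)) - K (c * (x i t - x (i + 1) t))) := by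
      apply Finset.sum_nonneg
      intro i hi
      rw [Finset.mem_Icc] at hi
      have ha : (0:ℝ) < c * (x (i - 1) t - x i t) := hpos i hi.1 (by omega)
      have hb : (0:ℝ) < c * (x i t - x (i + 1) t) := by
        have := hpos (i + 1) (by omega) (by omega)
        simpa only [Nat.add_sub_cancel] using this
      rcases le_total (c * (x (i - 1) t - x i t)) (c * (x i t - x (i + 1) t))
        with hle | hle
      · have h1 := hΦ'mono (Set.mem_Ioi.2 ha) (Set.mem_Ioi.2 hb) hle
        have h2 := hKmono (Set.mem_Ioi.2 ha) (Set.mem_Ioi.2 hb) hle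
        nlinarith
      · have h1 := hΦ'mono (Set.mem_Ioi.2 hb) (Set.mem_Ioi.2 ha) hle
        have h2 := hKmono (Set.mem_Ioi.2 hb) (Set.mem_Ioi.2 ha) hle
        nlinarith
    have : 0 ≤ m * c * ∑ i ∈ Finset.Icc 1 (N + 1),
        (Φ' (c * (x (i - 1) t - x i t)) - Φ' (c * (x i t - x (i + 1) t)))
          * (K (c * (x (i - 1) t - x i t)) - K (c * (x i t - x (i + 1) t))) :=
      mul_nonneg (mul_nonneg hm.le hcpos.le) hS
    linarith
  exact ⟨heq ▸ hWd, hsign⟩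
end

section
/- Suppose P(ρ) = cρ^γ with c > 0 and γ ∈ (1,2), μ(ρ) = Aρ^{(γ−1)/2} with A > 0, and fix ρ* > 0. Define Q(ρ) = (c/(γ−1))(ρ^γ − γ(ρ*)^{γ−1}ρ + (γ−1)(ρ*)^γ) and F₁(ρ) = A ∫_{ρ*}^{ρ} s^{(γ−4)/2} √(Q(s)) ds. Then F₁(ρ) → −∞ as ρ → 0⁺ and F₁(ρ) → +∞ as ρ → +∞. -/
open Filter Set intervalIntegral Real

/-- Auxiliary: the integrand is continuous on the positive reals. -/
lemma stmt14_aux_cont (c γ ρs : ℝ) :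
    ContinuousOn (fun s : ℝ => s ^ ((γ - 4) / 2) *
      Real.sqrt ((c / (γ - 1)) * (s ^ γ - γ * ρs ^ (γ - 1) * s + (γ - 1) * ρs ^ γ)))
      (Set.Ioi 0) := by
  have h1 : ContinuousOn (fun s : ℝ => s ^ ((γ - 4) / 2)) (Set.Ioi 0) := fun x hx =>
    (Real.continuousAt_rpow_const x _ (Or.inl (ne_of_gt hx))).continuousWithinAt
  have h2 : ContinuousOn (fun s : ℝ => s ^ γ) (Set.Ioi 0) := fun x hx =>
    (Real.continuousAt_rpow_const x _ (Or.inl (ne_of_gt hx))).continuousWithinAt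
  refine h1.mul (Real.continuous_sqrt.comp_continuousOn ?_)
  exact continuousOn_const.mul
    (((h2.sub ((continuous_const.mul continuous_id).continuousOn)).add continuousOn_const))

theorem stmt14 (c A γ ρs : ℝ) (hc : 0 < c) (hA : 0 < A)
    (hγ1 : 1 < γ) (hγ2 : γ < 2) (hρs : 0 < ρs)
    (Q F₁ : ℝ → ℝ)
    (hQ : ∀ ρ, Q ρ = (c / (γ - 1)) * (ρ ^ γ - γ * ρs ^ (γ - 1) * ρ + (γ - 1) * ρs ^ γ))
    (hF : ∀ ρ, F₁ ρ = A * ∫ s in ρs..ρ, s ^ ((γ - 4) / 2) * Real.sqrt (Q s)) :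
    Filter.Tendsto F₁ (nhdsWithin 0 (Set.Ioi 0)) Filter.atBot ∧
    Filter.Tendsto F₁ Filter.atTop Filter.atTop := by
  have hQfun : Q = fun ρ => (c / (γ - 1)) * (ρ ^ γ - γ * ρs ^ (γ - 1) * ρ + (γ - 1) * ρs ^ γ) :=
    funext hQ
  subst hQfun
  set p : ℝ := (γ - 4) / 2 with hp
  set f : ℝ → ℝ := fun s => s ^ p *
    Real.sqrt ((c / (γ - 1)) * (s ^ γ - γ * ρs ^ (γ - 1) * s + (γ - 1) * ρs ^ γ)) with hfdef
  have hγ1' : (0:ℝ) < γ - 1 := by linarith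
  have hcont : ContinuousOn f (Set.Ioi 0) := stmt14_aux_cont c γ ρs
  -- interval integrability of f on positive intervals
  have hint : ∀ a b : ℝ, 0 < a → 0 < b → IntervalIntegrable f MeasureTheory.volume a b := by
    intro a b ha hb
    refine (hcont.mono ?_).intervalIntegrable
    intro x hx
    rcases Set.mem_uIcc.mp hx with h | h
    · exact lt_of_lt_of_le ha h.1
    · exact lt_of_lt_of_le hb h.1
  -- nonnegativity of f on positives
  have hfnn : ∀ s : ℝ, 0 < s → 0 ≤ f s := fun s hs =>
    mul_nonneg (Real.rpow_nonneg hs.le _) (Real.sqrt_nonneg _)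
  -- helper to rewrite √(s^γ)
  have hsqrt_rpow : ∀ s : ℝ, 0 ≤ s → Real.sqrt (s ^ γ) = s ^ (γ / 2) := by
    intro s hs
    rw [Real.sqrt_eq_rpow, ← Real.rpow_mul hs]
    congr 1
    ring
  constructor
  · -- ρ → 0⁺ : F₁ → -∞
    set δ : ℝ := (γ - 1) / (2 * γ) * ρs with hδdef
    have hδpos : 0 < δ := by positivity
    have hδρs : δ < ρs := by
      have h1 : (γ - 1) / (2 * γ) < 1 := by
        rw [div_lt_one (by linarith)]; linarith
      nlinarith
    set K₂ : ℝ := Real.sqrt (c * ρs ^ γ / 2) with hK₂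
    have hK₂pos : 0 < K₂ := Real.sqrt_pos.mpr (by positivity)
    -- lower bound f s ≥ K₂ * s ^ p for 0 < s ≤ δ
    have hlow : ∀ s : ℝ, 0 < s → s ≤ δ → K₂ * s ^ p ≤ f s := by
      intro s hs hsδ
      have hQlb : c * ρs ^ γ / 2 ≤
          (c / (γ - 1)) * (s ^ γ - γ * ρs ^ (γ - 1) * s + (γ - 1) * ρs ^ γ) := by
        have h1 : (0:ℝ) ≤ s ^ γ := Real.rpow_nonneg hs.le _
        have h2 : ρs ^ (γ - 1) * ρs = ρs ^ γ := by
          rw [← Real.rpow_add_one hρs.ne' (γ - 1)]; ring_nf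
        have h3 : γ * ρs ^ (γ - 1) * s ≤ (γ - 1) / 2 * ρs ^ γ := by
          have h4 : γ * ρs ^ (γ - 1) * s ≤ γ * ρs ^ (γ - 1) * δ := by
            have : (0:ℝ) ≤ γ * ρs ^ (γ - 1) := by positivity
            nlinarith
          have h5 : γ * ρs ^ (γ - 1) * δ = (γ - 1) / 2 * ρs ^ γ := by
            rw [hδdef, ← h2]; field_simp
          linarith
        rw [div_mul_eq_mul_div, le_div_iff₀ hγ1']
        nlinarith [Real.rpow_nonneg hρs.le γ]
      calc K₂ * s ^ p ≤ Real.sqrt ((c / (γ - 1)) *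
            (s ^ γ - γ * ρs ^ (γ - 1) * s + (γ - 1) * ρs ^ γ)) * s ^ p := by
            have := Real.sqrt_le_sqrt hQlb
            exact mul_le_mul_of_nonneg_right this (Real.rpow_nonneg hs.le _)
        _ = f s := by rw [hfdef]; ring
    -- the comparison bound for ρ ∈ Ioo 0 δ
    have hbound : ∀ ρ : ℝ, ρ ∈ Set.Ioo (0:ℝ) δ →
        F₁ ρ ≤ A * (K₂ * ((ρ ^ (p + 1) - δ ^ (p + 1)) / (p + 1))) := by
      intro ρ hρ
      obtain ⟨hρ0, hρδ⟩ := hρ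
      have hi1 : IntervalIntegrable f MeasureTheory.volume ρs δ := hint _ _ hρs hδpos
      have hi2 : IntervalIntegrable f MeasureTheory.volume δ ρ := hint _ _ hδpos hρ0
      have hsplit : (∫ s in ρs..ρ, f s) = (∫ s in ρs..δ, f s) + ∫ s in δ..ρ, f s :=
        (integral_add_adjacent_intervals hi1 hi2).symm
      have hterm1 : (∫ s in ρs..δ, f s) ≤ 0 := by
        rw [integral_symm]
        have : (0:ℝ) ≤ ∫ s in δ..ρs, f s := by
          apply intervalIntegral.integral_nonneg hδρs.le
          intro x hx; exact hfnn x (lt_of_lt_of_le hδpos hx.1)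
        linarith
      have hig : IntervalIntegrable (fun s : ℝ => K₂ * s ^ p) MeasureTheory.volume ρ δ := by
        apply IntervalIntegrable.const_mul
        apply intervalIntegral.intervalIntegrable_rpow
        right
        intro h0
        rcases Set.mem_uIcc.mp h0 with h | h <;> linarith [h.1]
      have hterm2 : (∫ s in δ..ρ, f s) ≤ -(K₂ * ((δ ^ (p + 1) - ρ ^ (p + 1)) / (p + 1))) := by
        rw [integral_symm]
        have hmono : (∫ s in ρ..δ, K₂ * s ^ p) ≤ ∫ s in ρ..δ, f s := by
          apply intervalIntegral.integral_mono_on hρδ.le hig (hint _ _ hρ0 hδpos)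
          intro x hx
          exact hlow x (lt_of_lt_of_le hρ0 hx.1) hx.2
        have hval : (∫ s in ρ..δ, K₂ * s ^ p) =
            K₂ * ((δ ^ (p + 1) - ρ ^ (p + 1)) / (p + 1)) := by
          rw [intervalIntegral.integral_const_mul, integral_rpow]
          right
          constructor
          · intro h; rw [hp] at h; linarith [h]
          · intro h0
            rcases Set.mem_uIcc.mp h0 with h | h <;> linarith [h.1]
        linarith
      rw [hF]
      have hIle : (∫ s in ρs..ρ, f s) ≤ K₂ * ((ρ ^ (p + 1) - δ ^ (p + 1)) / (p + 1)) := by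
        rw [hsplit]
        have : -(K₂ * ((δ ^ (p + 1) - ρ ^ (p + 1)) / (p + 1))) =
            K₂ * ((ρ ^ (p + 1) - δ ^ (p + 1)) / (p + 1)) := by ring
        linarith [hterm1, hterm2, this ▸ hterm2]
      exact mul_le_mul_of_nonneg_left hIle hA.le
    -- the bound tends to -∞
    have hq : p + 1 = (γ - 2) / 2 := by rw [hp]; ring
    have hqneg : p + 1 < 0 := by rw [hq]; linarith
    have htop : Tendsto (fun ρ : ℝ => ρ ^ (p + 1)) (nhdsWithin 0 (Set.Ioi 0)) atTop := by
      have h1 : Tendsto (fun ρ : ℝ => (ρ⁻¹) ^ (-(p + 1))) (nhdsWithin 0 (Set.Ioi 0)) atTop :=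
        (tendsto_rpow_atTop (by linarith)).comp tendsto_inv_nhdsGT_zero
      refine h1.congr' ?_
      filter_upwards [self_mem_nhdsWithin] with x hx
      rw [Real.inv_rpow (le_of_lt hx), Real.rpow_neg (le_of_lt hx), inv_inv]
    have hUtend : Tendsto (fun ρ : ℝ => A * (K₂ * ((ρ ^ (p + 1) - δ ^ (p + 1)) / (p + 1))))
        (nhdsWithin 0 (Set.Ioi 0)) atBot := by
      have hr : A * K₂ / (p + 1) < 0 := div_neg_of_pos_of_neg (by positivity) hqneg
      have h2 : Tendsto (fun ρ : ℝ => ρ ^ (p + 1) - δ ^ (p + 1))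
          (nhdsWithin 0 (Set.Ioi 0)) atTop :=
        tendsto_atTop_add_const_right _ _ htop
      have h3 := (tendsto_const_mul_atBot_of_neg hr).mpr h2
      refine h3.congr fun ρ => ?_
      field_simp
    refine tendsto_atBot_mono' _ ?_ hUtend
    filter_upwards [Ioo_mem_nhdsGT_of_mem (Set.mem_Ico.mpr ⟨le_refl 0, hδpos⟩)] with ρ hρ
    exact hbound ρ hρ
  · -- ρ → +∞ : F₁ → +∞
    set s₀ : ℝ := (2 * γ) ^ (γ - 1)⁻¹ * ρs with hs₀def
    have h2γ : (1:ℝ) < 2 * γ := by linarith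
    have hs₀gt : ρs < s₀ := by
      have h1 : 1 < (2 * γ) ^ (γ - 1)⁻¹ :=
        (Real.one_lt_rpow_iff_of_pos (by linarith)).mpr
          (Or.inl ⟨h2γ, by positivity⟩)
      nlinarith
    have hs₀pos : 0 < s₀ := lt_trans hρs hs₀gt
    set K : ℝ := Real.sqrt (c / (2 * (γ - 1))) with hK
    have hKpos : 0 < K := Real.sqrt_pos.mpr (by positivity)
    -- lower bound on [s₀, ∞)
    have hlow : ∀ s : ℝ, s₀ ≤ s → K * s ^ (γ - 2) ≤ f s := by
      intro s hs
      have hspos : 0 < s := lt_of_lt_of_le hs₀pos hs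
      -- s ^ (γ-1) ≥ 2γ ρs^(γ-1)
      have h1 : 2 * γ * ρs ^ (γ - 1) ≤ s ^ (γ - 1) := by
        have h2 : s₀ ^ (γ - 1) = 2 * γ * ρs ^ (γ - 1) := by
          rw [hs₀def, Real.mul_rpow (by positivity) hρs.le,
            Real.rpow_inv_rpow (by linarith) (ne_of_gt hγ1')]
        rw [← h2]
        exact Real.rpow_le_rpow hs₀pos.le hs (by linarith)
      have h3 : s ^ γ = s ^ (γ - 1) * s := by
        rw [← Real.rpow_add_one hspos.ne' (γ - 1)]; ring_nf
      have hQlb : (c / (2 * (γ - 1))) * s ^ γ ≤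
          (c / (γ - 1)) * (s ^ γ - γ * ρs ^ (γ - 1) * s + (γ - 1) * ρs ^ γ) := by
        have h4 : γ * ρs ^ (γ - 1) * s ≤ s ^ γ / 2 := by
          rw [h3]
          nlinarith [Real.rpow_nonneg hρs.le (γ - 1)]
        have h5 : (0:ℝ) ≤ ρs ^ γ := Real.rpow_nonneg hρs.le _
        rw [div_mul_eq_mul_div, div_mul_eq_mul_div, div_le_div_iff₀ (by positivity) hγ1']
        nlinarith [mul_nonneg (mul_nonneg hc.le hγ1'.le) h5,
          mul_nonneg (mul_nonneg hc.le hγ1'.le)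
            (sub_nonneg.mpr (by linarith : 2 * (γ * ρs ^ (γ - 1) * s) ≤ s ^ γ))]
      have hsq : K * s ^ (γ / 2) ≤ Real.sqrt ((c / (γ - 1)) *
          (s ^ γ - γ * ρs ^ (γ - 1) * s + (γ - 1) * ρs ^ γ)) := by
        have := Real.sqrt_le_sqrt hQlb
        rwa [Real.sqrt_mul (by positivity) (s ^ γ), hsqrt_rpow s hspos.le] at this
      calc K * s ^ (γ - 2) = (K * s ^ (γ / 2)) * s ^ p := by
            rw [hp, mul_assoc, ← Real.rpow_add hspos]
            ring_nf
        _ ≤ Real.sqrt ((c / (γ - 1)) *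
              (s ^ γ - γ * ρs ^ (γ - 1) * s + (γ - 1) * ρs ^ γ)) * s ^ p :=
            mul_le_mul_of_nonneg_right hsq (Real.rpow_nonneg hspos.le _)
        _ = f s := by rw [hfdef]; ring
    -- lower bound for F₁ for ρ ≥ s₀
    have hbound : ∀ ρ : ℝ, s₀ ≤ ρ →
        A * (K * ((ρ ^ (γ - 1) - s₀ ^ (γ - 1)) / (γ - 1))) ≤ F₁ ρ := by
      intro ρ hρ
      have hρpos : 0 < ρ := lt_of_lt_of_le hs₀pos hρ
      have hi1 : IntervalIntegrable f MeasureTheory.volume ρs s₀ := hint _ _ hρs hs₀pos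
      have hi2 : IntervalIntegrable f MeasureTheory.volume s₀ ρ := hint _ _ hs₀pos hρpos
      have hsplit : (∫ s in ρs..ρ, f s) = (∫ s in ρs..s₀, f s) + ∫ s in s₀..ρ, f s :=
        (integral_add_adjacent_intervals hi1 hi2).symm
      have hterm1 : (0:ℝ) ≤ ∫ s in ρs..s₀, f s := by
        apply intervalIntegral.integral_nonneg hs₀gt.le
        intro x hx; exact hfnn x (lt_of_lt_of_le hρs hx.1)
      have hig : IntervalIntegrable (fun s : ℝ => K * s ^ (γ - 2))
          MeasureTheory.volume s₀ ρ := by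
        apply IntervalIntegrable.const_mul
        apply intervalIntegral.intervalIntegrable_rpow'
        linarith
      have hterm2 : K * ((ρ ^ (γ - 1) - s₀ ^ (γ - 1)) / (γ - 1)) ≤ ∫ s in s₀..ρ, f s := by
        have hmono : (∫ s in s₀..ρ, K * s ^ (γ - 2)) ≤ ∫ s in s₀..ρ, f s := by
          apply intervalIntegral.integral_mono_on hρ hig hi2
          intro x hx; exact hlow x hx.1
        have hval : (∫ s in s₀..ρ, K * s ^ (γ - 2)) =
            K * ((ρ ^ (γ - 1) - s₀ ^ (γ - 1)) / (γ - 1)) := by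
          rw [intervalIntegral.integral_const_mul, integral_rpow (Or.inl (by linarith))]
          have he : γ - 2 + 1 = γ - 1 := by ring
          rw [he]
        linarith
      rw [hF, hsplit]
      have := add_le_add hterm1 hterm2
      have h6 : K * ((ρ ^ (γ - 1) - s₀ ^ (γ - 1)) / (γ - 1)) ≤
          (∫ s in ρs..s₀, f s) + ∫ s in s₀..ρ, f s := by linarith
      exact mul_le_mul_of_nonneg_left h6 hA.le
    -- conclude
    have hLtend : Tendsto (fun ρ : ℝ => A * (K * ((ρ ^ (γ - 1) - s₀ ^ (γ - 1)) / (γ - 1))))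
        atTop atTop := by
      have h1 : Tendsto (fun ρ : ℝ => ρ ^ (γ - 1)) atTop atTop := tendsto_rpow_atTop hγ1'
      have h2 := tendsto_atTop_add_const_right atTop (-(s₀ ^ (γ - 1))) h1
      have h3 := (h2.atTop_div_const hγ1').const_mul_atTop hKpos
      have h4 := h3.const_mul_atTop hA
      refine h4.congr fun ρ => ?_
      ring_nf
    refine tendsto_atTop_mono' _ ?_ hLtend
    filter_upwards [eventually_ge_atTop s₀] with ρ hρ
    exact hbound ρ hρ
end

section
/- Suppose a differentiable function Z : [0,∞) → [0,∞) satisfies Ż(t) ≤ −σZ(t) + ωZ²(t) + B for constants σ, ω, B > 0, and moreover ∫₀^∞ Z(s) ds ≤ C for some constant C > 0. Then Z(t) ≤ e^{ωC}(Z(0) + B/σ) for all t ≥ 0. -/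
open Set intervalIntegral MeasureTheory

theorem stmt18 (Z : ℝ → ℝ) (σ ω B C : ℝ)
    (hσ : 0 < σ) (hω : 0 < ω) (hB : 0 < B) (hC : 0 < C)
    (hdiff : ∀ t ≥ (0:ℝ), DifferentiableAt ℝ Z t)
    (hnonneg : ∀ t ≥ (0:ℝ), 0 ≤ Z t)
    (hineq : ∀ t ≥ (0:ℝ), deriv Z t ≤ -σ * Z t + ω * (Z t)^2 + B)
    (hint : ∀ t ≥ (0:ℝ), ∫ s in (0:ℝ)..t, Z s ≤ C) :
    ∀ t ≥ (0:ℝ), Z t ≤ Real.exp (ω * C) * (Z 0 + B / σ) := by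
  intro t ht
  have hexpC : (1:ℝ) ≤ Real.exp (ω * C) := Real.one_le_exp (by positivity)
  have hBσ : 0 < B / σ := div_pos hB hσ
  rcases eq_or_lt_of_le ht with h0 | htpos
  · rw [← h0]
    nlinarith [hnonneg 0 le_rfl, Real.exp_pos (ω * C)]
  -- t > 0
  set I : ℝ → ℝ := fun u => ∫ s in (0:ℝ)..u, Z s with hI
  have hZcontOn : ContinuousOn Z (Ici 0) := fun u hu =>
    ((hdiff u hu).continuousAt).continuousWithinAt
  have hZint : ∀ b ∈ Icc (0:ℝ) t, IntervalIntegrable Z MeasureTheory.volume 0 b := by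
    intro b hb
    apply ContinuousOn.intervalIntegrable
    rw [uIcc_of_le hb.1]
    exact hZcontOn.mono (Icc_subset_Ici_self)
  have hIcont : ContinuousOn I (Icc 0 t) := by
    have : ContinuousOn I (uIcc 0 t) := by
      apply continuousOn_primitive_interval
      rw [uIcc_of_le ht]
      exact (hZcontOn.mono Icc_subset_Ici_self).integrableOn_Icc
    rwa [uIcc_of_le ht] at this
  have hInonneg : ∀ u ∈ Icc (0:ℝ) t, 0 ≤ I u := by
    intro u hu
    apply intervalIntegral.integral_nonneg hu.1
    intro s hs
    exact hnonneg s hs.1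
  have hIderiv : ∀ u ∈ Ioo (0:ℝ) t, HasDerivAt I (Z u) u := by
    intro u hu
    apply intervalIntegral.integral_hasDerivAt_right (hZint u ⟨hu.1.le, hu.2.le⟩)
    · exact ⟨Ioi 0, Ioi_mem_nhds hu.1,
        ((hZcontOn.mono (Ioi_subset_Ici le_rfl)).aestronglyMeasurable measurableSet_Ioi)⟩
    · exact (hdiff u hu.1.le).continuousAt
  set g : ℝ → ℝ := fun u =>
    Z 0 + B / σ * (Real.exp (σ * u) - 1) - Real.exp (σ * u - ω * I u) * Z u with hgdef
  have hgderiv : ∀ u ∈ Ioo (0:ℝ) t, HasDerivAt g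
      (B / σ * (Real.exp (σ * u) * σ) -
        (Real.exp (σ * u - ω * I u) * (σ - ω * Z u) * Z u
          + Real.exp (σ * u - ω * I u) * deriv Z u)) u := by
    intro u hu
    have hid : HasDerivAt (fun x : ℝ => σ * x) σ u := by
      simpa using (hasDerivAt_id u).const_mul σ
    have h1 : HasDerivAt (fun x => Z 0 + B / σ * (Real.exp (σ * x) - 1))
        (B / σ * (Real.exp (σ * u) * σ)) u :=
      (((hid.exp).sub_const 1).const_mul (B / σ)).const_add (Z 0)
    have h2 : HasDerivAt (fun x => σ * x - ω * I x) (σ - ω * Z u) u :=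
      hid.sub ((hIderiv u hu).const_mul ω)
    have h3 : HasDerivAt (fun x => Real.exp (σ * x - ω * I x) * Z x)
        (Real.exp (σ * u - ω * I u) * (σ - ω * Z u) * Z u
          + Real.exp (σ * u - ω * I u) * deriv Z u) u := by
      have := (h2.exp).mul (hdiff u hu.1.le).hasDerivAt
      exact this
    exact h1.sub h3
  have hgderiv_nonneg : ∀ u ∈ Ioo (0:ℝ) t, 0 ≤ deriv g u := by
    intro u hu
    rw [(hgderiv u hu).deriv]
    have hX : (σ - ω * Z u) * Z u + deriv Z u ≤ B := by
      have := hineq u hu.1.le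
      nlinarith [this]
    have hE : Real.exp (σ * u - ω * I u) ≤ Real.exp (σ * u) := by
      apply Real.exp_le_exp.2
      nlinarith [hInonneg u ⟨hu.1.le, hu.2.le⟩]
    have hEpos : (0:ℝ) < Real.exp (σ * u - ω * I u) := Real.exp_pos _
    have h1 : Real.exp (σ * u - ω * I u) * ((σ - ω * Z u) * Z u + deriv Z u)
        ≤ Real.exp (σ * u - ω * I u) * B := by
      exact mul_le_mul_of_nonneg_left hX hEpos.le
    have h2 : Real.exp (σ * u - ω * I u) * B ≤ Real.exp (σ * u) * B :=
      mul_le_mul_of_nonneg_right hE hB.le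
    have heq : B / σ * (Real.exp (σ * u) * σ) = Real.exp (σ * u) * B := by
      field_simp
    linarith [h1, h2, heq]
  have hgcont : ContinuousOn g (Icc 0 t) := by
    have hZc : ContinuousOn Z (Icc 0 t) := hZcontOn.mono Icc_subset_Ici_self
    have hec : ContinuousOn (fun u => Real.exp (σ * u - ω * I u)) (Icc 0 t) :=
      Real.continuous_exp.comp_continuousOn
        (((continuous_const.mul continuous_id).continuousOn).sub
          (continuousOn_const.mul hIcont))
    exact (continuousOn_const.add
      ((((Real.continuous_exp.comp (continuous_const.mul continuous_id)).continuousOn).sub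
        continuousOn_const).const_smul (B / σ))).sub (hec.mul hZc)
  have hgdiff : DifferentiableOn ℝ g (interior (Icc 0 t)) := by
    rw [interior_Icc]
    exact fun u hu => ((hgderiv u hu).differentiableAt).differentiableWithinAt
  have hmono : MonotoneOn g (Icc 0 t) := by
    apply monotoneOn_of_deriv_nonneg (convex_Icc 0 t) hgcont hgdiff
    intro u hu
    rw [interior_Icc] at hu
    exact hgderiv_nonneg u hu
  have hg0 : g 0 = 0 := by
    have : I 0 = 0 := intervalIntegral.integral_same
    simp [hgdef, this]
  have hkey : Real.exp (σ * t - ω * I t) * Z t ≤ Z 0 + B / σ * (Real.exp (σ * t) - 1) := by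
    have h := hmono (left_mem_Icc.2 ht) (right_mem_Icc.2 ht) ht
    rw [hg0] at h
    simp only [hgdef] at h
    linarith
  have hIC : I t ≤ C := hint t ht
  have hZt : Z t ≤ (Z 0 + B / σ * (Real.exp (σ * t) - 1)) * Real.exp (ω * I t - σ * t) := by
    have hz : (ω * I t - σ * t) + (σ * t - ω * I t) = 0 := by ring
    calc Z t = Real.exp (ω * I t - σ * t) * (Real.exp (σ * t - ω * I t) * Z t) := by
          rw [← mul_assoc, ← Real.exp_add, hz, Real.exp_zero, one_mul]
      _ ≤ Real.exp (ω * I t - σ * t) * (Z 0 + B / σ * (Real.exp (σ * t) - 1)) :=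
          mul_le_mul_of_nonneg_left hkey (Real.exp_pos _).le
      _ = (Z 0 + B / σ * (Real.exp (σ * t) - 1)) * Real.exp (ω * I t - σ * t) := mul_comm _ _
  have h1 : Real.exp (ω * I t - σ * t) ≤ Real.exp (ω * C) * Real.exp (-(σ * t)) := by
    rw [← Real.exp_add]
    apply Real.exp_le_exp.2
    nlinarith
  have hR : 0 ≤ Z 0 + B / σ * (Real.exp (σ * t) - 1) := by
    have h2 : (1:ℝ) ≤ Real.exp (σ * t) := Real.one_le_exp (by positivity)
    nlinarith [hnonneg 0 le_rfl]
  have hstep : Z t ≤ (Z 0 + B / σ * (Real.exp (σ * t) - 1)) *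
      (Real.exp (ω * C) * Real.exp (-(σ * t))) :=
    hZt.trans (mul_le_mul_of_nonneg_left h1 hR)
  have haE : Real.exp (-(σ * t)) * Real.exp (σ * t) = 1 := by
    rw [← Real.exp_add]; simp
  have ha1 : Real.exp (-(σ * t)) ≤ 1 := by
    rw [show (1:ℝ) = Real.exp 0 by simp]
    exact Real.exp_le_exp.2 (by nlinarith)
  nlinarith [hstep, haE, ha1, mul_nonneg (Real.exp_pos (ω * C)).le (hnonneg 0 le_rfl),
    mul_pos (Real.exp_pos (ω * C)) hBσ, (Real.exp_pos (-(σ * t))).le]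
end
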